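/- Every C₃ line arrangement of simple type has a rigid pencil form. -/

import Mathlib

noncomputable section
attribute [local instance] Classical.propDecidable

/-- The projective plane: points of `ℙ(ℂ³)`.  A "line" of `ℂP²` with equation
`a x + b y + c z = 0` is identified with the point `(a : b : c)` of the dual plane. -/
abbrev ProjPlane := Projectivization ℂ (Fin 3 → ℂ)

/-- The line `l = (a : b : c)` passes through the point `q = (x : y : z)`,
i.e. `a x + b y + c z = 0` (well defined on representatives). -/
def incident (l q : ProjPlane) : Prop := ∑ t : Fin 3, l.rep t * q.rep t = 0

/-- The set of indices of lines of the arrangement `A` passing through `q`. -/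
def pointSet {ι : Type} [Fintype ι] [DecidableEq ι] (A : ι → ProjPlane) (q : ProjPlane) :
    Finset ι :=
  Finset.univ.filter fun i => incident (A i) q

/-- The combinatorics of the arrangement `A`: the collection of the sets `P(q)` of lines
through `q`, for the points `q` lying on at least two lines (the singular points). -/
def combinatorics {ι : Type} [Fintype ι] [DecidableEq ι] (A : ι → ProjPlane) :
    Finset (Finset ι) :=
  Finset.univ.filter fun P => 2 ≤ P.card ∧ ∃ q, P = pointSet A q

/-- The action of a linear automorphism of `ℂ³` (an element of `GL₃(ℂ)`, inducing an
element of `PGL₃(ℂ)`) on the projective plane. -/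
def projMap (g : (Fin 3 → ℂ) ≃ₗ[ℂ] (Fin 3 → ℂ)) (x : ProjPlane) : ProjPlane :=
  Projectivization.map (g : (Fin 3 → ℂ) →ₗ[ℂ] (Fin 3 → ℂ)) (by simpa using g.injective) x

/-- Equivalence of (abstract) combinatorics given as collections of subsets of `Fin n`:
some relabelling of the lines carries one onto the other. -/
def CombEquiv {n : ℕ} (Q R : Finset (Finset (Fin n))) : Prop :=
  ∃ σ : Equiv.Perm (Fin n), Q.image (Finset.image σ) = R

/-- The subarrangement `A_i` formed by the first `i` lines of `A` in the order `ω`. -/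
def subArr {ι : Type} [Fintype ι] [DecidableEq ι] (A : ι → ProjPlane)
    (ω : ι ≃ Fin (Fintype.card ι)) (i : ℕ) (h : i ≤ Fintype.card ι) : Fin i → ProjPlane :=
  fun k => A (ω.symm (Fin.castLE h k))

/-- `A` is inductively rigid: for some order `ω`, every line arrangement whose
combinatorics is equivalent to `C(A_i)` lies in the `PGL₃(ℂ)`-orbit of `A_i`,
i.e. the moduli space of each `A_i` is a single point. -/
def InductivelyRigid {ι : Type} [Fintype ι] [DecidableEq ι] (A : ι → ProjPlane) : Prop :=
  ∃ ω : ι ≃ Fin (Fintype.card ι), ∀ (i : ℕ) (h : i ≤ Fintype.card ι)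
    (B : Fin i → ProjPlane), Function.Injective B →
    CombEquiv (combinatorics B) (combinatorics (subArr A ω i h)) →
    ∃ g : (Fin 3 → ℂ) ≃ₗ[ℂ] (Fin 3 → ℂ), ∀ k, B k = projMap g (subArr A ω i h k)

/-- `A` has a rigid pencil form: it contains an inductively rigid subarrangement `A'`
(indexed by `S`) having a singular point `P₀ = q₀` such that every multiple point `P` of
`A` (as a point `qP` of `ℂP²`) satisfies (RP1) at least two lines of `A'` pass through
`P`, or (RP2) the line joining `P` and `P₀` is a line of `A'`. -/
def HasRigidPencilForm {n : ℕ} (A : Fin n → ProjPlane) : Prop :=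
  ∃ S : Finset (Fin n),
    InductivelyRigid (fun k : {x : Fin n // x ∈ S} => A k.val) ∧
    ∃ q₀ : ProjPlane, 2 ≤ (S.filter fun i => incident (A i) q₀).card ∧
      ∀ qP : ProjPlane, 3 ≤ (pointSet A qP).card →
        (2 ≤ (S.filter fun i => incident (A i) qP).card ∨
          ∃ i ∈ S, incident (A i) qP ∧ incident (A i) q₀)

/-- Every multiple point of `A` lies on some line of `D`. -/
def coversMult {n : ℕ} (A : Fin n → ProjPlane) (D : Finset (Fin n)) : Prop :=
  ∀ q : ProjPlane, 3 ≤ (pointSet A q).card → ∃ i ∈ D, incident (A i) q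

/-- `A` is of class `C_k`: `k` is the minimal cardinality of a set of lines of `A`
containing all multiple points of `A`. -/
def IsCk {n : ℕ} (A : Fin n → ProjPlane) (k : ℕ) : Prop :=
  (∃ D, D.card = k ∧ coversMult A D) ∧ ∀ D, coversMult A D → k ≤ D.card

/-!
Small arrangements are rigid as soon as their combinatorics pins down a projective frame. Up to
three lines without a common point have linearly independent coordinate vectors, and a linear
automorphism carries any such family to any other. Three concurrent lines, or four lines no three
of which are concurrent, form a circuit: their vectors satisfy a single linear relation with all
coefficients nonzero, and after rescaling by these coefficients the same argument applies.

If the three lines of `D` meet in a point, they form the rigid subarrangement and their common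
point is the centre of the pencil. Otherwise let `z` be the line of `D` carrying a single multiple
point `p`, and centre the pencil at the intersection of the two other lines `x`, `y`: multiple
points on `x` or `y` satisfy (RP2), and `p` satisfies (RP1) as soon as a second line through `p`
is in the subarrangement. That line is `x` or `y` if one of them passes through `p`; if not, `p`
lies on at least two lines of `A` besides `z`, at most one of which passes through `x ∩ y`, and
adding one that avoids it keeps the four lines in general position.
-/

open Finset Projectivization Matrix

section LinearAlgebra

variable {K V : Type*} [Field K] [AddCommGroup V] [Module K V]

theorem LinearIndependent.exists_extend_castLE {m n : ℕ} {u : Fin m → V}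
    (hu : LinearIndependent K u) (hmn : m ≤ n) (hn : n ≤ Module.finrank K V) :
    ∃ w : Fin n → V, LinearIndependent K w ∧ ∀ i, w (Fin.castLE hmn i) = u i := by
  obtain ⟨k, rfl⟩ := Nat.exists_eq_add_of_le hmn
  induction k with
  | zero => exact ⟨u, hu, fun i => rfl⟩
  | succ k ih =>
    obtain ⟨w, hw, hwu⟩ := ih (by omega) (by omega)
    obtain ⟨x, hx⟩ := exists_linearIndependent_snoc_of_lt_finrank hw (by omega)
    refine ⟨Fin.snoc w x, hx, fun i => ?_⟩
    rw [← hwu, ← Fin.snoc_castSucc (α := fun _ => V) x w]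
    rfl

theorem exists_linearEquiv_apply_eq [FiniteDimensional K V] {m : ℕ} {u u' : Fin m → V}
    (hu : LinearIndependent K u) (hu' : LinearIndependent K u') :
    ∃ g : V ≃ₗ[K] V, ∀ i, g (u i) = u' i := by
  have hm : m ≤ Module.finrank K V := by simpa using hu.fintype_card_le_finrank
  obtain ⟨w, hw, hwu⟩ := hu.exists_extend_castLE hm le_rfl
  obtain ⟨w', hw', hwu'⟩ := hu'.exists_extend_castLE hm le_rfl
  let b := basisOfLinearIndependentOfCardEqFinrank' w hw (Fintype.card_fin _)
  let b' := basisOfLinearIndependentOfCardEqFinrank' w' hw' (Fintype.card_fin _)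
  refine ⟨b.equiv b' (Equiv.refl _), fun i => ?_⟩
  have h := b.equiv_apply (Fin.castLE hm i) b' (Equiv.refl _)
  simp only [b, b', coe_basisOfLinearIndependentOfCardEqFinrank', Equiv.refl_apply] at h
  rw [← hwu, ← hwu', h]

theorem exists_forall_ne_zero_sum_smul_eq_zero {m : ℕ} {v : Fin (m + 1) → V}
    (hv : ¬LinearIndependent K v) (hsub : ∀ j, LinearIndependent K (v ∘ Fin.succAbove j)) :
    ∃ c : Fin (m + 1) → K, (∀ i, c i ≠ 0) ∧ ∑ i, c i • v i = 0 := by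
  obtain ⟨c, hc, i, hi⟩ := Fintype.not_linearIndependent_iff.1 hv
  refine ⟨c, fun j hj => hi ?_, hc⟩
  rw [Fin.sum_univ_succAbove _ j, hj, zero_smul, zero_add] at hc
  rcases Fin.eq_self_or_eq_succAbove j i with rfl | ⟨k, rfl⟩
  · exact hj
  · exact Fintype.linearIndependent_iff.1 (hsub j) (c ∘ Fin.succAbove j) hc k

theorem exists_ne_zero_forall_dotProduct_eq_zero_iff {ι : Type*} [Fintype ι] [DecidableEq ι]
    (v : ι → ι → K) : (∃ w ≠ 0, ∀ i, v i ⬝ᵥ w = 0) ↔ ¬LinearIndependent K v := by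
  rw [show (∃ w ≠ 0, ∀ i, v i ⬝ᵥ w = 0) ↔ ∃ w ≠ 0, Matrix.of v *ᵥ w = 0 by
      simp [funext_iff, Matrix.mulVec],
    Matrix.exists_mulVec_eq_zero_iff, ← not_ne_iff, ← isUnit_iff_ne_zero,
    ← Matrix.isUnit_iff_isUnit_det, ← Matrix.linearIndependent_rows_iff_isUnit]
  rfl

end LinearAlgebra

theorem Projectivization.eq_cross_of_orthogonal {F : Type*} [Field F] [DecidableEq F]
    {u v w : Projectivization F (Fin 3 → F)} (hvw : v ≠ w) (hv : u.orthogonal v)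
    (hw : u.orthogonal w) : u = cross v w := by
  induction u with | h u hu =>
  induction v with | h v hv' =>
  induction w with | h w hw' =>
  rw [orthogonal_mk] at hv hw
  rw [cross_mk_of_ne hv' hw' hvw, mk_eq_mk_iff_crossProduct_eq_zero,
    cross_cross_eq_smul_sub_smul', hw, dotProduct_comm, hv, zero_smul, zero_smul, sub_zero]

theorem incident_iff_orthogonal {l q : ProjPlane} : incident l q ↔ l.orthogonal q := by
  conv_rhs => rw [← l.mk_rep, ← q.mk_rep]
  rfl

theorem incident_mk {l : ProjPlane} {w : Fin 3 → ℂ} (hw : w ≠ 0) :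
    incident l (mk ℂ w hw) ↔ l.rep ⬝ᵥ w = 0 := by
  rw [incident_iff_orthogonal]
  conv_lhs => rw [← l.mk_rep]
  rfl

theorem incident_cross_left {l l' : ProjPlane} (h : l ≠ l') : incident l (cross l l') :=
  incident_iff_orthogonal.2 (orthogonal_cross_left h)

theorem incident_cross_right {l l' : ProjPlane} (h : l ≠ l') : incident l' (cross l l') :=
  incident_iff_orthogonal.2 (orthogonal_cross_right h)

theorem point_eq_of_incident {l l' q q' : ProjPlane} (hl : l ≠ l')
    (hq : incident l q) (hq' : incident l' q) (hp : incident l q') (hp' : incident l' q') :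
    q = q' := by
  simp only [incident_iff_orthogonal, orthogonal_comm (v := l), orthogonal_comm (v := l')]
    at hq hq' hp hp'
  rw [eq_cross_of_orthogonal hl hq hq', eq_cross_of_orthogonal hl hp hp']

theorem line_eq_of_incident {l l' q q' : ProjPlane} (hq : q ≠ q')
    (hl : incident l q) (hl' : incident l' q) (hlq : incident l q') (hlq' : incident l' q') :
    l = l' := by
  simp only [incident_iff_orthogonal] at hl hl' hlq hlq'
  rw [eq_cross_of_orthogonal hq hl hlq, eq_cross_of_orthogonal hq hl' hlq']

theorem concurrent_iff_dependent (A : Fin 3 → ProjPlane) :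
    (∃ q, ∀ k, incident (A k) q) ↔ Dependent A := by
  rw [dependent_iff, ← exists_ne_zero_forall_dotProduct_eq_zero_iff]
  constructor
  · rintro ⟨q, hq⟩
    exact ⟨q.rep, q.rep_nonzero, hq⟩
  · rintro ⟨w, hw, hAw⟩
    exact ⟨mk ℂ w hw, fun k => (incident_mk hw).2 (hAw k)⟩

theorem projMap_eq_of_smul_eq_smul {g : (Fin 3 → ℂ) ≃ₗ[ℂ] (Fin 3 → ℂ)}
    {x y : ProjPlane} {c d : ℂ} (hc : c ≠ 0) (h : g (c • x.rep) = d • y.rep) :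
    projMap g x = y := by
  conv_lhs => rw [← x.mk_rep]
  conv_rhs => rw [← y.mk_rep]
  refine (mk_eq_mk_iff' ℂ _ _ _ y.rep_nonzero).2 ⟨c⁻¹ * d, ?_⟩
  rw [mul_smul, ← h, map_smul, inv_smul_smul₀ hc]
  rfl

theorem exists_projMap_of_independent {m : ℕ} {A B : Fin m → ProjPlane}
    (hA : Independent A) (hB : Independent B) :
    ∃ g : (Fin 3 → ℂ) ≃ₗ[ℂ] (Fin 3 → ℂ), ∀ k, B k = projMap g (A k) := by
  obtain ⟨g, hg⟩ := exists_linearEquiv_apply_eq (independent_iff.1 hA) (independent_iff.1 hB)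
  refine ⟨g, fun k => (projMap_eq_of_smul_eq_smul (d := 1) one_ne_zero ?_).symm⟩
  simpa using hg k

def IsCircuit {m : ℕ} (A : Fin (m + 1) → ProjPlane) : Prop :=
  Dependent A ∧ ∀ j, Independent (A ∘ Fin.succAbove j)

theorem IsCircuit.exists_projMap {m : ℕ} {A B : Fin (m + 1) → ProjPlane}
    (hA : IsCircuit A) (hB : IsCircuit B) :
    ∃ g : (Fin 3 → ℂ) ≃ₗ[ℂ] (Fin 3 → ℂ), ∀ k, B k = projMap g (A k) := by
  obtain ⟨c, hc0, hc⟩ := exists_forall_ne_zero_sum_smul_eq_zero (dependent_iff.1 hA.1)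
    fun j => independent_iff.1 (hA.2 j)
  obtain ⟨d, hd0, hd⟩ := exists_forall_ne_zero_sum_smul_eq_zero (dependent_iff.1 hB.1)
    fun j => independent_iff.1 (hB.2 j)
  have hind (C : Fin (m + 1) → ProjPlane) (hC : IsCircuit C) (e : Fin (m + 1) → ℂ)
      (he : ∀ i, e i ≠ 0) :
      LinearIndependent ℂ fun k : Fin m => e k.castSucc • (C k.castSucc).rep := by
    have h := (independent_iff.1 (hC.2 (Fin.last m))).units_smul
      fun k => Units.mk0 _ (he k.castSucc)
    rw [Fin.succAbove_last] at h
    exact h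
  obtain ⟨g, hg⟩ := exists_linearEquiv_apply_eq (hind A hA c hc0) (hind B hB d hd0)
  have hlast :
      g (c (Fin.last m) • (A (Fin.last m)).rep) = d (Fin.last m) • (B (Fin.last m)).rep := by
    simp only [Fin.sum_univ_castSucc, Function.comp_apply] at hc hd
    rw [eq_neg_of_add_eq_zero_right hc, eq_neg_of_add_eq_zero_right hd, map_neg, map_sum]
    simp only [hg]
  refine ⟨g, fun k => (projMap_eq_of_smul_eq_smul (d := d k) (hc0 k) ?_).symm⟩
  induction k using Fin.lastCases with
  | last => exact hlast
  | cast k => exact hg k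

section Combinatorics

variable {ι : Type} [Fintype ι] [DecidableEq ι]

def HasTriplePoint (A : ι → ProjPlane) : Prop := ∃ q, 3 ≤ #(pointSet A q)

theorem mem_pointSet {A : ι → ProjPlane} {q : ProjPlane} {i : ι} :
    i ∈ pointSet A q ↔ incident (A i) q := by
  simp [pointSet]

theorem hasTriplePoint_iff_exists_mem_combinatorics (A : ι → ProjPlane) :
    HasTriplePoint A ↔ ∃ P ∈ combinatorics A, 3 ≤ #P := by
  simp only [HasTriplePoint, combinatorics, mem_filter, mem_univ, true_and]
  constructor
  · rintro ⟨q, hq⟩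
    exact ⟨pointSet A q, ⟨by omega, q, rfl⟩, hq⟩
  · rintro ⟨P, ⟨-, q, rfl⟩, hP⟩
    exact ⟨q, hP⟩

theorem CombEquiv.exists_three_le_card_iff {m : ℕ} {Q R : Finset (Finset (Fin m))}
    (h : CombEquiv Q R) : (∃ P ∈ Q, 3 ≤ #P) ↔ ∃ P ∈ R, 3 ≤ #P := by
  obtain ⟨σ, rfl⟩ := h
  simp [card_image_of_injective _ σ.injective]

theorem CombEquiv.hasTriplePoint_iff {m : ℕ} {A B : Fin m → ProjPlane}
    (h : CombEquiv (combinatorics B) (combinatorics A)) :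
    HasTriplePoint B ↔ HasTriplePoint A := by
  rw [hasTriplePoint_iff_exists_mem_combinatorics, hasTriplePoint_iff_exists_mem_combinatorics,
    h.exists_three_le_card_iff]

theorem HasTriplePoint.of_comp {ι' : Type} [Fintype ι'] [DecidableEq ι'] {A : ι → ProjPlane}
    {e : ι' → ι} (he : Function.Injective e) (h : HasTriplePoint (A ∘ e)) :
    HasTriplePoint A := by
  obtain ⟨q, hq⟩ := h
  refine ⟨q, hq.trans (card_le_card_of_injOn e (fun i hi => ?_) he.injOn)⟩
  simpa [mem_pointSet] using hi

theorem not_hasTriplePoint_of_card_le_two (A : ι → ProjPlane) (h : Fintype.card ι ≤ 2) :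
    ¬HasTriplePoint A := by
  rintro ⟨q, hq⟩
  have := card_le_univ (pointSet A q)
  omega

theorem hasTriplePoint_iff_concurrent (A : Fin 3 → ProjPlane) :
    HasTriplePoint A ↔ ∃ q, ∀ k, incident (A k) q := by
  refine exists_congr fun q => ⟨fun hq k => mem_pointSet.1 ?_, fun hq => ?_⟩
  · rw [eq_univ_of_card (pointSet A q) (le_antisymm (card_le_univ _) (by simpa using hq))]
    exact mem_univ k
  · rw [eq_univ_of_forall fun k => mem_pointSet.2 (hq k)]
    simp

theorem independent_of_not_hasTriplePoint {m : ℕ} {A : Fin m → ProjPlane} (hm : m ≤ 3)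
    (hA : Function.Injective A) (h : ¬HasTriplePoint A) : Independent A := by
  interval_cases m
  · exact independent_iff.2 linearIndependent_empty_type
  · exact independent_iff.2 (linearIndependent_unique_iff.2 (A default).rep_nonzero)
  · rw [show A = ![A 0, A 1] from funext fun k => by fin_cases k <;> rfl]
    exact (independent_pair_iff_ne _ _).2 (hA.ne zero_ne_one)
  · rwa [independent_iff_not_dependent, ← concurrent_iff_dependent,
      ← hasTriplePoint_iff_concurrent]

theorem isCircuit_of_concurrent {A : Fin 3 → ProjPlane} (hA : Function.Injective A)
    (hc : ∃ q, ∀ k, incident (A k) q) : IsCircuit A :=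
  ⟨(concurrent_iff_dependent A).1 hc, fun j =>
    independent_of_not_hasTriplePoint (by norm_num) (hA.comp Fin.succAbove_right_injective)
      (not_hasTriplePoint_of_card_le_two _ (by simp))⟩

theorem isCircuit_of_not_hasTriplePoint {A : Fin 4 → ProjPlane} (hA : Function.Injective A)
    (h : ¬HasTriplePoint A) : IsCircuit A := by
  refine ⟨?_, fun j => independent_of_not_hasTriplePoint (by norm_num)
    (hA.comp Fin.succAbove_right_injective)
    fun h' => h (h'.of_comp Fin.succAbove_right_injective)⟩
  rw [dependent_iff]
  intro hind
  have := hind.fintype_card_le_finrank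
  simp at this

end Combinatorics

def IsRigid {m : ℕ} (A : Fin m → ProjPlane) : Prop :=
  ∀ B : Fin m → ProjPlane, Function.Injective B →
    CombEquiv (combinatorics B) (combinatorics A) →
    ∃ g : (Fin 3 → ℂ) ≃ₗ[ℂ] (Fin 3 → ℂ), ∀ k, B k = projMap g (A k)

theorem isRigid_of_not_hasTriplePoint {m : ℕ} {A : Fin m → ProjPlane} (hm : m ≤ 4)
    (hA : Function.Injective A) (h : ¬HasTriplePoint A) : IsRigid A := by
  intro B hB hBA
  have hB' : ¬HasTriplePoint B := hBA.hasTriplePoint_iff.not.2 h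
  rcases Nat.lt_or_eq_of_le hm with hm | rfl
  · exact exists_projMap_of_independent (independent_of_not_hasTriplePoint (by omega) hA h)
      (independent_of_not_hasTriplePoint (by omega) hB hB')
  · exact (isCircuit_of_not_hasTriplePoint hA h).exists_projMap
      (isCircuit_of_not_hasTriplePoint hB hB')

theorem isRigid_of_concurrent {A : Fin 3 → ProjPlane} (hA : Function.Injective A)
    (hc : ∃ q, ∀ k, incident (A k) q) : IsRigid A := by
  intro B hB hBA
  have hBc : ∃ q, ∀ k, incident (B k) q := by
    rwa [← hasTriplePoint_iff_concurrent, hBA.hasTriplePoint_iff, hasTriplePoint_iff_concurrent]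
  exact (isCircuit_of_concurrent hA hc).exists_projMap (isCircuit_of_concurrent hB hBc)

section InductivelyRigid

variable {ι : Type} [Fintype ι] [DecidableEq ι] {A : ι → ProjPlane}

theorem inductivelyRigid_of_not_hasTriplePoint (hA : Function.Injective A)
    (hcard : Fintype.card ι ≤ 4) (h : ¬HasTriplePoint A) : InductivelyRigid A := by
  refine ⟨Fintype.equivFin ι, fun i hi => ?_⟩
  have he := (Fintype.equivFin ι).symm.injective.comp (Fin.castLE_injective hi)
  exact isRigid_of_not_hasTriplePoint (hi.trans hcard) (hA.comp he) fun h' => h (h'.of_comp he)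

theorem inductivelyRigid_of_concurrent (hA : Function.Injective A) (hcard : Fintype.card ι = 3)
    (hc : ∃ q, ∀ i, incident (A i) q) : InductivelyRigid A := by
  refine ⟨Fintype.equivFin ι, fun i hi => ?_⟩
  have he := (Fintype.equivFin ι).symm.injective.comp (Fin.castLE_injective hi)
  rcases Nat.lt_or_eq_of_le (hi.trans hcard.le) with hi3 | rfl
  · exact isRigid_of_not_hasTriplePoint (by omega) (hA.comp he)
      (not_hasTriplePoint_of_card_le_two _ (by simp; omega))
  · obtain ⟨q, hq⟩ := hc
    exact isRigid_of_concurrent (hA.comp he) ⟨q, fun k => hq _⟩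

end InductivelyRigid

theorem card_filter_le_two_of_pairs {α : Type*} [DecidableEq α] {P : α → Prop}
    [DecidablePred P] {a b c d : α} (hab : P a → P b → ¬P c ∧ ¬P d)
    (hcd : P c → P d → ¬P a ∧ ¬P b) :
    #(({a, b, c, d} : Finset α).filter P) ≤ 2 := by
  by_cases ha : P a <;> by_cases hb : P b <;> by_cases hc : P c <;> by_cases hd : P d <;>
    simp_all [filter_insert, filter_singleton, card_le_two]

section Arrangement

variable {n : ℕ} {A : Fin n → ProjPlane}

theorem card_pointSet_subtype (S : Finset (Fin n)) (q : ProjPlane) :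
    #(pointSet (fun k : S => A k) q) = #(S.filter fun i => incident (A i) q) := by
  rw [← card_map (Function.Embedding.subtype _)]
  congr 1
  ext i
  simp [pointSet, and_comm]

theorem injective_restrict (hA : Function.Injective A) (S : Finset (Fin n)) :
    Function.Injective fun k : S => A k :=
  fun _ _ h => Subtype.ext (hA h)

theorem two_le_card_filter {S : Finset (Fin n)} {P : Fin n → Prop} [DecidablePred P]
    {x y : Fin n} (hxy : x ≠ y) (hx : x ∈ S) (hy : y ∈ S) (hPx : P x) (hPy : P y) :
    2 ≤ #(S.filter P) :=
  one_lt_card.2 ⟨x, mem_filter.2 ⟨hx, hPx⟩, y, mem_filter.2 ⟨hy, hPy⟩, hxy⟩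

theorem not_hasTriplePoint_of_not_concurrent {S : Finset (Fin n)} (hS : #S ≤ 3)
    (hnc : ¬∃ q, ∀ i ∈ S, incident (A i) q) : ¬HasTriplePoint fun k : S => A k := by
  rintro ⟨q, hq⟩
  rw [card_pointSet_subtype] at hq
  have hfilter :=
    eq_of_subset_of_card_le (filter_subset (fun i => incident (A i) q) S) (by omega)
  exact hnc ⟨q, fun i hi => (mem_filter.1 (hfilter.symm ▸ hi : i ∈ S.filter _)).2⟩

theorem exists_incident_ne_not_incident (hA : Function.Injective A) {p q : ProjPlane}
    (hpq : p ≠ q) (hp : 3 ≤ #(pointSet A p)) (z : Fin n) :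
    ∃ e, incident (A e) p ∧ e ≠ z ∧ ¬incident (A e) q := by
  by_contra! hall
  have : 1 < #((pointSet A p).erase z) := by
    have := pred_card_le_card_erase (s := pointSet A p) (a := z)
    omega
  obtain ⟨d, hd, e, he, hde⟩ := one_lt_card.1 this
  rw [mem_erase, mem_pointSet] at hd he
  exact hde (hA (line_eq_of_incident hpq hd.2 he.2 (hall d hd.2 hd.1) (hall e he.2 he.1)))

theorem not_hasTriplePoint_of_two_pencils (hA : Function.Injective A) {x y z e : Fin n}
    {p q₀ : ProjPlane} (hxy : x ≠ y) (hze : z ≠ e) (hx₀ : incident (A x) q₀)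
    (hy₀ : incident (A y) q₀) (hz₀ : ¬incident (A z) q₀) (he₀ : ¬incident (A e) q₀)
    (hzp : incident (A z) p) (hep : incident (A e) p) (hxp : ¬incident (A x) p)
    (hyp : ¬incident (A y) p) :
    ¬HasTriplePoint fun k : ({e, z, x, y} : Finset (Fin n)) => A k := by
  rintro ⟨q, hq⟩
  rw [card_pointSet_subtype] at hq
  refine (card_filter_le_two_of_pairs (fun he hz => ?_) (fun hx hy => ?_)).not_gt hq
  · obtain rfl := point_eq_of_incident (hA.ne hze.symm) he hz hep hzp
    exact ⟨hxp, hyp⟩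
  · obtain rfl := point_eq_of_incident (hA.ne hxy) hx hy hx₀ hy₀
    exact ⟨he₀, hz₀⟩

theorem hasRigidPencilForm_of_concurrent (hA : Function.Injective A) {D : Finset (Fin n)}
    (hD : #D = 3) (hcov : coversMult A D) (hc : ∃ q, ∀ i ∈ D, incident (A i) q) :
    HasRigidPencilForm A := by
  obtain ⟨q, hq⟩ := hc
  refine ⟨D, inductivelyRigid_of_concurrent (injective_restrict hA D) (by simpa using hD)
    ⟨q, fun i => hq i i.2⟩, q, by rw [filter_true_of_mem hq, hD]; omega, fun p hp => ?_⟩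
  obtain ⟨i, hi, hpi⟩ := hcov p hp
  exact Or.inr ⟨i, hi, hpi, hq i hi⟩

theorem hasRigidPencilForm_of_triangle (hA : Function.Injective A) {S : Finset (Fin n)}
    (hS : InductivelyRigid fun k : S => A k) {x y z w : Fin n} (hxy : x ≠ y)
    (hx : x ∈ S) (hy : y ∈ S) (hz : z ∈ S) (hw : w ∈ S) (hwz : w ≠ z)
    (hcov : coversMult A {z, x, y})
    {p : ProjPlane} (hpz : incident (A z) p) (hpw : incident (A w) p)
    (huniq : ∀ q, incident (A z) q → 3 ≤ #(pointSet A q) → q = p) :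
    HasRigidPencilForm A := by
  have hAxy := hA.ne hxy
  refine ⟨S, hS, cross (A x) (A y), two_le_card_filter hxy hx hy (incident_cross_left hAxy)
    (incident_cross_right hAxy), fun q hq => ?_⟩
  obtain ⟨i, hi, hqi⟩ := hcov q hq
  simp only [mem_insert, mem_singleton] at hi
  rcases hi with rfl | rfl | rfl
  · obtain rfl := huniq q hqi hq
    exact Or.inl (two_le_card_filter hwz.symm hz hw hqi hpw)
  · exact Or.inr ⟨i, hx, hqi, incident_cross_left hAxy⟩
  · exact Or.inr ⟨i, hy, hqi, incident_cross_right hAxy⟩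

theorem hasRigidPencilForm_of_not_concurrent (hA : Function.Injective A) {x y z : Fin n}
    (hxy : x ≠ y) (hxz : x ≠ z) (hyz : y ≠ z) (hcov : coversMult A {z, x, y})
    (hnc : ¬∃ q, ∀ i ∈ ({z, x, y} : Finset (Fin n)), incident (A i) q) {p : ProjPlane}
    (hpz : incident (A z) p) (hp : 3 ≤ #(pointSet A p))
    (huniq : ∀ q, incident (A z) q → 3 ≤ #(pointSet A q) → q = p) :
    HasRigidPencilForm A := by
  by_cases hpxy : incident (A x) p ∨ incident (A y) p
  · have hS := inductivelyRigid_of_not_hasTriplePoint (injective_restrict hA _)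
      (by rw [Fintype.card_coe]; exact card_le_three.trans (by norm_num))
      (not_hasTriplePoint_of_not_concurrent card_le_three hnc)
    rcases hpxy with hpx | hpy
    · exact hasRigidPencilForm_of_triangle hA hS hxy (by simp) (by simp) (by simp) (by simp) hxz
        hcov hpz hpx huniq
    · exact hasRigidPencilForm_of_triangle hA hS hxy (by simp) (by simp) (by simp) (by simp) hyz
        hcov hpz hpy huniq
  push Not at hpxy
  have hAxy := hA.ne hxy
  have hz₀ : ¬incident (A z) (cross (A x) (A y)) := fun h => hnc ⟨_, by
    simpa using ⟨h, incident_cross_left hAxy, incident_cross_right hAxy⟩⟩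
  obtain ⟨e, hpe, hez, he₀⟩ := exists_incident_ne_not_incident hA
    (fun h => hpxy.1 (by rw [h]; exact incident_cross_left hAxy)) hp z
  have hS := inductivelyRigid_of_not_hasTriplePoint (injective_restrict hA _)
    (by rw [Fintype.card_coe]; exact card_le_four)
    (not_hasTriplePoint_of_two_pencils hA hxy hez.symm (incident_cross_left hAxy)
      (incident_cross_right hAxy) hz₀ he₀ hpz hpe hpxy.1 hpxy.2)
  exact hasRigidPencilForm_of_triangle hA hS hxy (by simp) (by simp) (by simp)
    (mem_insert_self e _) hez hcov hpz hpe huniq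

end Arrangement

theorem statement11_general {n : ℕ} (A : Fin n → ProjPlane) (hA : Function.Injective A)
    (D : Finset (Fin n)) (hDcard : D.card = 3) (hDcov : coversMult A D)
    (hsimple :
      ((¬ ∃ q, ∀ i ∈ D, incident (A i) q) ∧
        ∃ i ∈ D, ∃! q : ProjPlane, incident (A i) q ∧ 3 ≤ (pointSet A q).card) ∨
      (∃ q, ∀ i ∈ D, incident (A i) q)) :
    HasRigidPencilForm A := by
  rcases hsimple with ⟨hnc, z, hz, p, ⟨hpz, hp⟩, huniq⟩ | hc
  · obtain ⟨x, y, hxy, hxyD⟩ := card_eq_two.1 (by rw [card_erase_of_mem hz, hDcard] :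
      #(D.erase z) = 2)
    have hD : D = {z, x, y} := by rw [← insert_erase hz, hxyD]
    have hx : x ∈ D.erase z := hxyD ▸ mem_insert_self x _
    have hy : y ∈ D.erase z := hxyD ▸ mem_insert_of_mem (mem_singleton_self y)
    subst hD
    exact hasRigidPencilForm_of_not_concurrent hA hxy (ne_of_mem_erase hx) (ne_of_mem_erase hy)
      hDcov hnc hpz hp fun q hqz hq => huniq q ⟨hqz, hq⟩
  · exact hasRigidPencilForm_of_concurrent hA hDcard hDcov hc

/-- Every `C₃` line arrangement of simple type has a rigid pencil
form: here `D` is a set of three lines containing all multiple points of `A`, and `A` is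
of simple type, i.e. either (i) the three lines of `D` are in general position (not
concurrent) and one of them contains exactly one multiple point, or (ii) the three lines
of `D` are concurrent. -/
theorem statement11 {n : ℕ} (A : Fin n → ProjPlane) (hA : Function.Injective A)
    (hC3 : IsCk A 3) (D : Finset (Fin n)) (hDcard : D.card = 3) (hDcov : coversMult A D)
    (hsimple :
      ((¬ ∃ q, ∀ i ∈ D, incident (A i) q) ∧
        ∃ i ∈ D, ∃! q : ProjPlane, incident (A i) q ∧ 3 ≤ (pointSet A q).card) ∨
      (∃ q, ∀ i ∈ D, incident (A i) q)) :
    HasRigidPencilForm A :=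
  statement11_general A hA D hDcard hDcov hsimple
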